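/- Let α < 0 and τ ∈ ℝ, and set ᾱ = √(1+α²). Then the survival function of the univariate extended skew-normal distribution satisfies lim_{x→∞} [1 − Φ_{α,τ}(x)] · √(2π)·Φ(τ/ᾱ)·ᾱ²·(−α)·x² · e^{ατx + τ²/2} / φ(ᾱx) = 1; that is, 1 − Φ_{α,τ}(x) is asymptotically equivalent to φ(ᾱx)·e^{−ατx−τ²/2} / (Φ(τ/ᾱ)·ᾱ²·(−α)·√(2π)·x²) as x → ∞ (for τ = 0 this is the form 1 − Φ_{α,0}(x) ∼ φ(ᾱx)/(Φ(0)·ᾱ²(−α)√(2π)x²) used in the paper). -/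

import Mathlib

open MeasureTheory Filter Matrix

/-- standard normal density -/
noncomputable def stdPdf (t : ℝ) : ℝ := Real.exp (-t^2/2) / Real.sqrt (2*Real.pi)

/-- standard normal cdf Φ -/
noncomputable def stdCdf (x : ℝ) : ℝ := ∫ t in Set.Iic x, stdPdf t

/-- univariate extended skew-normal cdf Φ_{α,τ} -/
noncomputable def esnCdf (α τ x : ℝ) : ℝ :=
  ∫ t in Set.Iic x, stdPdf t * stdCdf (α*t+τ) / stdCdf (τ / Real.sqrt (1+α^2))

lemma sqrt2pi_pos : 0 < Real.sqrt (2*Real.pi) :=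
  Real.sqrt_pos.2 (by positivity)

lemma stdPdf_pos (t : ℝ) : 0 < stdPdf t :=
  div_pos (Real.exp_pos _) sqrt2pi_pos

lemma stdPdf_le (t : ℝ) : stdPdf t ≤ (Real.sqrt (2*Real.pi))⁻¹ := by
  rw [stdPdf, div_eq_mul_inv]
  have h1 : Real.exp (-t^2/2) ≤ 1 := Real.exp_le_one_iff.2 (by nlinarith [sq_nonneg t])
  nlinarith [sqrt2pi_pos, inv_pos.2 sqrt2pi_pos, h1]

lemma continuous_stdPdf : Continuous stdPdf := by
  unfold stdPdf
  fun_prop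

lemma stdPdf_eq (t : ℝ) : stdPdf t = Real.exp (-(1/2) * t^2) / Real.sqrt (2*Real.pi) := by
  rw [stdPdf]; ring_nf

lemma integrable_stdPdf : Integrable stdPdf := by
  have : Integrable (fun t : ℝ => Real.exp (-(1/2) * t^2)) := integrable_exp_neg_mul_sq (by norm_num)
  have h2 := this.mul_const (Real.sqrt (2*Real.pi))⁻¹
  refine h2.congr (Filter.Eventually.of_forall fun t => ?_)
  simp [stdPdf_eq, div_eq_mul_inv]

lemma integral_stdPdf : ∫ t, stdPdf t = 1 := by
  simp only [stdPdf_eq, div_eq_mul_inv]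
  rw [integral_mul_const, integral_gaussian]
  rw [show Real.pi / (1*2⁻¹) = 2 * Real.pi by ring]
  exact mul_inv_cancel₀ (ne_of_gt sqrt2pi_pos)

lemma hasDerivAt_integral_Iic {g : ℝ → ℝ} (hg : Integrable g) (hc : Continuous g) (x : ℝ) :
    HasDerivAt (fun y => ∫ t in Set.Iic y, g t) (g x) x := by
  have heq : ∀ y : ℝ, ∫ t in Set.Iic y, g t
      = (∫ t in Set.Iic (0:ℝ), g t) + ∫ t in (0:ℝ)..y, g t := by
    intro y
    have := intervalIntegral.integral_Iic_sub_Iic (μ := volume) (f := g) (a := (0:ℝ)) (b := y)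
      hg.integrableOn hg.integrableOn
    linarith [this]
  have h1 : HasDerivAt (fun y => ∫ t in (0:ℝ)..y, g t) (g x) x := by
    exact intervalIntegral.integral_hasDerivAt_right hg.intervalIntegrable
      (hc.stronglyMeasurableAtFilter _ _) hc.continuousAt
  have h2 := h1.const_add (∫ t in Set.Iic (0:ℝ), g t)
  simpa only [← heq] using h2

lemma hasDerivAt_stdCdf (x : ℝ) : HasDerivAt stdCdf (stdPdf x) x :=
  hasDerivAt_integral_Iic integrable_stdPdf continuous_stdPdf x

lemma continuous_stdCdf : Continuous stdCdf := by
  have : ∀ x, HasDerivAt stdCdf (stdPdf x) x := hasDerivAt_stdCdf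
  exact (fun x => (this x).differentiableAt.continuousAt) |> continuous_iff_continuousAt.2

lemma stdCdf_pos (x : ℝ) : 0 < stdCdf x := by
  rw [stdCdf]
  rw [setIntegral_pos_iff_support_of_nonneg_ae
    (Filter.Eventually.of_forall fun t => (stdPdf_pos t).le) integrable_stdPdf.integrableOn]
  have : Function.support stdPdf = Set.univ := by
    ext t; simp [Function.mem_support, (stdPdf_pos t).ne']
  rw [this, Set.univ_inter]
  simp [Real.volume_Iic]

lemma stdCdf_le_one (x : ℝ) : stdCdf x ≤ 1 := by
  rw [stdCdf, ← integral_stdPdf]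
  exact setIntegral_le_integral integrable_stdPdf
    (Filter.Eventually.of_forall fun t => (stdPdf_pos t).le)

lemma tendsto_stdCdf_atTop : Tendsto stdCdf atTop (nhds 1) := by
  have := MeasureTheory.AECover.integral_tendsto_of_countably_generated
      (MeasureTheory.aecover_Iic (μ := volume) (l := atTop) (tendsto_id (α := ℝ)))
      (f := stdPdf) integrable_stdPdf
  rwa [integral_stdPdf] at this

lemma tendsto_stdCdf_atBot : Tendsto stdCdf atBot (nhds 0) := by
  have h : Tendsto (fun x : ℝ => ∫ t, (Set.Iic x).indicator stdPdf t) atBot (nhds (∫ _t : ℝ, (0:ℝ))) := by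
    apply tendsto_integral_filter_of_dominated_convergence stdPdf
    · exact Filter.Eventually.of_forall fun x =>
        (integrable_stdPdf.indicator measurableSet_Iic).aestronglyMeasurable
    · refine Filter.Eventually.of_forall fun x => Filter.Eventually.of_forall fun t => ?_
      rw [Set.indicator_apply]
      split_ifs
      · rw [Real.norm_of_nonneg (stdPdf_pos t).le]
      · simpa using (stdPdf_pos t).le
    · exact integrable_stdPdf
    · refine Filter.Eventually.of_forall fun t => ?_
      have : ∀ᶠ x in atBot, (Set.Iic x).indicator stdPdf t = 0 := by
        filter_upwards [eventually_lt_atBot t] with x hx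
        exact Set.indicator_of_notMem (by simpa using hx.not_ge) _
      exact Tendsto.congr' (this.mono fun x hx => hx.symm) tendsto_const_nhds
  simp only [integral_zero] at h
  refine h.congr fun x => ?_
  rw [integral_indicator measurableSet_Iic, stdCdf]

lemma prod_pdf_eq (α τ t : ℝ) :
    stdPdf t * stdPdf (α*t+τ)
      = (Real.exp (-τ^2/(2*(1+α^2))) / (2*Real.pi)) *
          Real.exp (-((1+α^2)/2) * (t + α*τ/(1+α^2))^2) := by
  have hA : (1+α^2) ≠ 0 := by positivity
  have h2π : (0:ℝ) ≤ 2*Real.pi := by positivity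
  rw [stdPdf, stdPdf, div_mul_div_comm, Real.mul_self_sqrt h2π, ← Real.exp_add,
    div_mul_eq_mul_div, ← Real.exp_add]
  congr 2
  field_simp
  ring

lemma integrable_prod_pdf (α τ : ℝ) : Integrable (fun t => stdPdf t * stdPdf (α*t+τ)) := by
  refine integrable_stdPdf.mono' ?_ (Filter.Eventually.of_forall fun t => ?_)
  · exact (continuous_stdPdf.mul (continuous_stdPdf.comp (by fun_prop))).aestronglyMeasurable
  · rw [Real.norm_of_nonneg (mul_nonneg (stdPdf_pos t).le (stdPdf_pos _).le)]
    have h1 : (1:ℝ) ≤ Real.sqrt (2*Real.pi) := by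
      rw [show (1:ℝ) = Real.sqrt 1 from (Real.sqrt_one).symm]
      exact Real.sqrt_le_sqrt (by nlinarith [Real.pi_gt_three])
    have h2 : stdPdf (α*t+τ) ≤ 1 := (stdPdf_le _).trans (inv_le_one_of_one_le₀ h1)
    calc stdPdf t * stdPdf (α*t+τ) ≤ stdPdf t * 1 :=
          mul_le_mul_of_nonneg_left h2 (stdPdf_pos t).le
      _ = stdPdf t := mul_one _

lemma prod_pdf_integral (α τ : ℝ) :
    ∫ t, stdPdf t * stdPdf (α*t+τ)
      = stdPdf (τ / Real.sqrt (1+α^2)) / Real.sqrt (1+α^2) := by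
  have hA : (0:ℝ) < 1+α^2 := by positivity
  have hsA : (0:ℝ) < Real.sqrt (1+α^2) := Real.sqrt_pos.2 hA
  simp only [prod_pdf_eq α τ]
  rw [MeasureTheory.integral_const_mul]
  have hshift : ∫ t : ℝ, Real.exp (-((1+α^2)/2) * (t + α*τ/(1+α^2))^2)
      = ∫ t : ℝ, Real.exp (-((1+α^2)/2) * t^2) :=
    integral_add_right_eq_self (fun t => Real.exp (-((1+α^2)/2) * t^2)) _
  rw [hshift, integral_gaussian]
  have h1 : Real.pi / ((1+α^2)/2) = (2*Real.pi) / (1+α^2) := by field_simp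
  rw [h1, Real.sqrt_div (by positivity : (0:ℝ) ≤ 2*Real.pi)]
  rw [stdPdf, div_pow, Real.sq_sqrt hA.le]
  have hA' : (1+α^2) ≠ 0 := hA.ne'
  have h3 : -(τ^2/(1+α^2))/2 = -τ^2/(2*(1+α^2)) := by field_simp
  rw [h3]
  have hs : Real.sqrt (2*Real.pi) * Real.sqrt (2*Real.pi) = 2*Real.pi :=
    Real.mul_self_sqrt (by positivity)
  set E := Real.exp (-τ^2/(2*(1+α^2)))
  rw [div_div, div_mul_div_comm, div_eq_div_iff (by positivity) (by positivity)]
  linear_combination (E * Real.sqrt (1+α^2)) * hs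

lemma integrable_esn_integrand (α τ : ℝ) :
    Integrable (fun t => stdPdf t * stdCdf (α*t+τ)) := by
  refine integrable_stdPdf.mono' ?_ (Filter.Eventually.of_forall fun t => ?_)
  · exact (continuous_stdPdf.mul (continuous_stdCdf.comp (by fun_prop))).aestronglyMeasurable
  · rw [Real.norm_of_nonneg (mul_nonneg (stdPdf_pos t).le (stdCdf_pos _).le)]
    calc stdPdf t * stdCdf (α*t+τ) ≤ stdPdf t * 1 :=
          mul_le_mul_of_nonneg_left (stdCdf_le_one _) (stdPdf_pos t).le
      _ = stdPdf t := mul_one _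

lemma hasDerivAt_esn_integral (α τ₀ : ℝ) :
    HasDerivAt (fun τ => ∫ t, stdPdf t * stdCdf (α*t+τ))
      (stdPdf (τ₀ / Real.sqrt (1+α^2)) / Real.sqrt (1+α^2)) τ₀ := by
  have key := hasDerivAt_integral_of_dominated_loc_of_deriv_le (μ := volume) (x₀ := τ₀)
      (F := fun τ t => stdPdf t * stdCdf (α*t+τ)) (F' := fun τ t => stdPdf t * stdPdf (α*t+τ))
      (bound := fun t => (Real.sqrt (2*Real.pi))⁻¹ * stdPdf t) (Metric.ball_mem_nhds τ₀ one_pos)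
      (Filter.Eventually.of_forall fun τ =>
        ((continuous_stdPdf.mul (continuous_stdCdf.comp (by fun_prop))).aestronglyMeasurable))
      (integrable_esn_integrand α τ₀)
      ((continuous_stdPdf.mul (continuous_stdPdf.comp (by fun_prop))).aestronglyMeasurable)
      (Filter.Eventually.of_forall fun t => fun x _ => ?_)
      (integrable_stdPdf.const_mul _)
      (Filter.Eventually.of_forall fun t => fun x _ => ?_)
  · rw [← prod_pdf_integral α τ₀]
    exact key.2
  · rw [Real.norm_of_nonneg (mul_nonneg (stdPdf_pos t).le (stdPdf_pos _).le), mul_comm]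
    exact mul_le_mul_of_nonneg_right (stdPdf_le _) (stdPdf_pos t).le
  · have h1 : HasDerivAt (fun x => α*t+x) 1 x := (hasDerivAt_id x).const_add (α*t)
    have h2 := (hasDerivAt_stdCdf (α*t+x)).comp x h1
    simpa using h2.const_mul (stdPdf t)

lemma esn_normalization (α τ : ℝ) :
    ∫ t, stdPdf t * stdCdf (α*t+τ) = stdCdf (τ / Real.sqrt (1+α^2)) := by
  have hA : (0:ℝ) < 1+α^2 := by positivity
  have hsA : (0:ℝ) < Real.sqrt (1+α^2) := Real.sqrt_pos.2 hA
  set f : ℝ → ℝ := fun τ => (∫ t, stdPdf t * stdCdf (α*t+τ)) - stdCdf (τ / Real.sqrt (1+α^2))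
    with hf
  have hderiv : ∀ τ, HasDerivAt f 0 τ := by
    intro τ
    have h1 := hasDerivAt_esn_integral α τ
    have h2 : HasDerivAt (fun τ : ℝ => stdCdf (τ / Real.sqrt (1+α^2)))
        (stdPdf (τ / Real.sqrt (1+α^2)) / Real.sqrt (1+α^2)) τ := by
      have ha : HasDerivAt (fun τ : ℝ => τ / Real.sqrt (1+α^2)) (Real.sqrt (1+α^2))⁻¹ τ := by
        simpa using (hasDerivAt_id τ).div_const (Real.sqrt (1+α^2))
      have := (hasDerivAt_stdCdf (τ / Real.sqrt (1+α^2))).comp τ ha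
      simpa [div_eq_mul_inv, Function.comp_def] using this
    simpa [Pi.sub_def] using h1.sub h2
  have hconst : ∀ a b : ℝ, f a = f b := by
    intro a b
    have hdiff : Differentiable ℝ f := fun x => (hderiv x).differentiableAt
    have hd0 : ∀ x, deriv f x = 0 := fun x => (hderiv x).deriv
    exact is_const_of_deriv_eq_zero hdiff hd0 a b
  have hlim : Tendsto f atBot (nhds 0) := by
    have hI : Tendsto (fun τ => ∫ t, stdPdf t * stdCdf (α*t+τ)) atBot (nhds (∫ _t : ℝ, (0:ℝ))) := by
      apply tendsto_integral_filter_of_dominated_convergence stdPdf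
      · exact Filter.Eventually.of_forall fun τ =>
          (continuous_stdPdf.mul (continuous_stdCdf.comp (by fun_prop))).aestronglyMeasurable
      · refine Filter.Eventually.of_forall fun τ => Filter.Eventually.of_forall fun t => ?_
        rw [Real.norm_of_nonneg (mul_nonneg (stdPdf_pos t).le (stdCdf_pos _).le)]
        calc stdPdf t * stdCdf (α*t+τ) ≤ stdPdf t * 1 :=
              mul_le_mul_of_nonneg_left (stdCdf_le_one _) (stdPdf_pos t).le
          _ = stdPdf t := mul_one _
      · exact integrable_stdPdf
      · refine Filter.Eventually.of_forall fun t => ?_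
        have h1 : Tendsto (fun τ : ℝ => α*t+τ) atBot atBot := tendsto_atBot_add_const_left _ _ tendsto_id
        have h2 := tendsto_stdCdf_atBot.comp h1
        simpa using (tendsto_const_nhds (x := stdPdf t)).mul h2
    simp only [integral_zero] at hI
    have hG : Tendsto (fun τ : ℝ => stdCdf (τ / Real.sqrt (1+α^2))) atBot (nhds 0) := by
      refine tendsto_stdCdf_atBot.comp ?_
      exact Tendsto.atBot_div_const hsA tendsto_id
    simpa using hI.sub hG
  have : Tendsto f atBot (nhds (f τ)) := by
    have : f = fun _ => f τ := funext fun a => hconst a τ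
    rw [this]; exact tendsto_const_nhds
  have := tendsto_nhds_unique this hlim
  have hfτ : f τ = 0 := this
  have := sub_eq_zero.mp hfτ
  exact this

lemma hasDerivAt_stdPdf (x : ℝ) : HasDerivAt stdPdf (-x * stdPdf x) x := by
  have h : HasDerivAt (fun t : ℝ => -t^2/2) (-x) x := by
    have := ((hasDerivAt_pow 2 x).neg).div_const 2
    simpa using this.congr_deriv (by push_cast; ring)
  have h2 := (h.exp).div_const (Real.sqrt (2*Real.pi))
  have : stdPdf = fun t => Real.exp (-t^2/2) / Real.sqrt (2*Real.pi) := rfl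
  rw [this]
  convert h2 using 1
  · rfl
  · rfl
  simp only []
  ring

lemma tendsto_stdPdf_atBot : Tendsto stdPdf atBot (nhds 0) := by
  have h1 : Tendsto (fun y : ℝ => y*y) atBot atTop := Tendsto.atBot_mul_atBot₀ tendsto_id tendsto_id
  have h2 : Tendsto (fun y : ℝ => -y^2/2) atBot atBot := by
    have := (tendsto_const_mul_atBot_of_neg (show (-1/2:ℝ) < 0 by norm_num)).2 h1
    exact this.congr (fun y => by ring)
  have h3 := (Real.tendsto_exp_atBot.comp h2).div_const (Real.sqrt (2*Real.pi))
  have hs : stdPdf = fun y => Real.exp (-y^2/2) / Real.sqrt (2*Real.pi) := rfl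
  rw [hs]
  simpa only [Function.comp_def, zero_div] using h3

lemma tendsto_neg_inv_atBot : Tendsto (fun y : ℝ => (-y)⁻¹) atBot (nhds 0) :=
  tendsto_inv_atTop_zero.comp tendsto_neg_atBot_atTop

lemma mills : Tendsto (fun y => stdCdf y * (-y) / stdPdf y) atBot (nhds 1) := by
  have main : Tendsto (fun y => stdCdf y / (stdPdf y / (-y))) atBot (nhds 1) := by
    apply HasDerivAt.lhopital_zero_atBot (f' := stdPdf)
      (g' := fun y => stdPdf y * (y^2+1)/y^2)
    · exact Filter.Eventually.of_forall hasDerivAt_stdCdf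
    · filter_upwards [eventually_lt_atBot (0:ℝ)] with y hy
      have hne : -y ≠ 0 := neg_ne_zero.2 hy.ne
      have h := (hasDerivAt_stdPdf y).div ((hasDerivAt_id y).neg) hne
      refine h.congr_deriv ?_
      simp only [Pi.neg_apply, id_eq]
      field_simp
      ring
    · filter_upwards [eventually_lt_atBot (0:ℝ)] with y hy
      have hy2 : (0:ℝ) < y^2 := by nlinarith
      have : (0:ℝ) < stdPdf y * (y^2+1)/y^2 :=
        div_pos (mul_pos (stdPdf_pos y) (by nlinarith)) hy2
      exact this.ne'
    · exact tendsto_stdCdf_atBot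
    · have := tendsto_stdPdf_atBot.mul tendsto_neg_inv_atBot
      simpa [div_eq_mul_inv] using this
    · have hden : Tendsto (fun y : ℝ => y^2+1) atBot atTop := by
        have h1 : Tendsto (fun y : ℝ => y*y) atBot atTop :=
          Tendsto.atBot_mul_atBot₀ tendsto_id tendsto_id
        have := tendsto_atTop_add_const_right atBot (1:ℝ) h1
        exact this.congr (fun y => by ring)
      have hinv : Tendsto (fun y : ℝ => 1/(y^2+1)) atBot (nhds 0) := by
        simpa [one_div, Function.comp_def] using tendsto_inv_atTop_zero.comp hden
      have h4 : Tendsto (fun y : ℝ => 1 - 1/(y^2+1)) atBot (nhds 1) := by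
        simpa using (tendsto_const_nhds (x := (1:ℝ))).sub hinv
      refine Tendsto.congr' ?_ h4
      filter_upwards [eventually_lt_atBot (0:ℝ)] with y hy
      have hy2 : y^2+1 ≠ 0 := by positivity
      have hpy : stdPdf y ≠ 0 := (stdPdf_pos y).ne'
      field_simp
      ring
  refine Tendsto.congr' ?_ main
  filter_upwards [eventually_lt_atBot (0:ℝ)] with y hy
  have hpy : stdPdf y ≠ 0 := (stdPdf_pos y).ne'
  have hne : -y ≠ 0 := neg_ne_zero.2 hy.ne
  rw [div_div_eq_mul_div]

lemma ratio_core (α τ x s P A φx φa Φa : ℝ)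
    (hs : s ≠ 0) (hP : P ≠ 0) (hx : x ≠ 0) (hφx : φx ≠ 0) (hφa : φa ≠ 0)
    (hα : α ≠ 0) (hA : A ≠ 0)
    (hQ : A*x^2 + α*τ*x + 2 ≠ 0) (hax : α*x+τ ≠ 0) :
    -(φx * Φa / P) / (s^2*(φx*φa) * -(A*x^2 + α*τ*x + 2) / (s*(s*P*A*(-α))*x^3))
      = Φa * -(α*x+τ) / φa * (A*(-α)*x^3 / (-(α*x+τ) * (A*x^2 + α*τ*x + 2))) := by
  have hN : s^2*(φx*φa) * -(A*x^2 + α*τ*x + 2) ≠ 0 :=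
    mul_ne_zero (mul_ne_zero (pow_ne_zero 2 hs) (mul_ne_zero hφx hφa)) (neg_ne_zero.2 hQ)
  have hD : φa * (-(α*x+τ) * (A*x^2 + α*τ*x + 2)) ≠ 0 :=
    mul_ne_zero hφa (mul_ne_zero (neg_ne_zero.2 hax) hQ)
  rw [div_div_eq_mul_div, div_mul_div_comm, div_eq_div_iff hN hD]
  field_simp

lemma final_core (P α τ A s x ψx Fx : ℝ) (hs : s ≠ 0)
    (hexp2 : Real.exp (α*τ*x + τ^2/2) * Real.exp ψx = Real.exp (-(Real.sqrt A * x)^2/2)) :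
    Fx * (s * P * A * -α * x^2 * Real.exp (α*τ*x + τ^2/2)) /
        (Real.exp (-(Real.sqrt A * x)^2/2) / s)
      = Fx / (Real.exp ψx / (s * (s*P*A*(-α)) * x^2)) := by
  rw [div_div_eq_mul_div, div_div_eq_mul_div]
  rw [div_eq_div_iff (Real.exp_ne_zero _) (Real.exp_ne_zero _)]
  linear_combination (Fx * s * s * P * A * (-α) * x^2) * hexp2

/-- Sharper tail asymptotics for α < 0:
1 − Φ_{α,τ}(x) ∼ φ(ᾱx)·e^{−ατx−τ²/2}/(Φ(τ/ᾱ)ᾱ²(−α)√(2π)x²). -/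
theorem esn1_survival_asymptotics_neg
    (α : ℝ) (hα : α < 0) (τ : ℝ) :
    Tendsto (fun x : ℝ =>
        (1 - esnCdf α τ x) *
          (Real.sqrt (2*Real.pi) * stdCdf (τ / Real.sqrt (1+α^2)) *
            (Real.sqrt (1+α^2))^2 * (-α) * x^2 *
            Real.exp (α*τ*x + τ^2/2)) /
          stdPdf (Real.sqrt (1+α^2) * x))
      atTop (nhds 1) := by
  have hA : (0:ℝ) < 1+α^2 := by positivity
  have hsA : (0:ℝ) < Real.sqrt (1+α^2) := Real.sqrt_pos.2 hA
  have hsA2 : (Real.sqrt (1+α^2))^2 = 1+α^2 := Real.sq_sqrt hA.le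
  set A : ℝ := 1+α^2 with hAdef
  set s : ℝ := Real.sqrt (2*Real.pi) with hsdef
  have hs : (0:ℝ) < s := sqrt2pi_pos
  set Φτ : ℝ := stdCdf (τ / Real.sqrt A) with hPdef
  have hΦτ : (0:ℝ) < Φτ := stdCdf_pos _
  set c : ℝ := s * Φτ * A * (-α) with hcdef
  have hc : (0:ℝ) < c := by
    apply mul_pos (mul_pos (mul_pos hs hΦτ) hA) (by linarith)
  have hstdPdf : ∀ y : ℝ, stdPdf y = Real.exp (-y^2/2) / s := fun _ => rfl
  set g : ℝ → ℝ := fun t => stdPdf t * stdCdf (α*t+τ) / Φτ with hgdef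
  have hgint : Integrable g := (integrable_esn_integrand α τ).div_const Φτ
  have hgcont : Continuous g :=
    (continuous_stdPdf.mul (continuous_stdCdf.comp (by fun_prop))).div_const Φτ
  have hesn : esnCdf α τ = fun y => ∫ t in Set.Iic y, g t := rfl
  set F : ℝ → ℝ := fun x => 1 - esnCdf α τ x with hFdef
  set ψ : ℝ → ℝ := fun x => -A*x^2/2 - α*τ*x - τ^2/2 with hψdef
  set G : ℝ → ℝ := fun x => Real.exp (ψ x) / (s*c*x^2) with hGdef
  set G' : ℝ → ℝ := fun x => Real.exp (ψ x) * (-(A*x^2 + α*τ*x + 2)) / (s*c*x^3) with hG'def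
  -- eventual positivity of polynomial factor
  have hQev : ∀ᶠ x in atTop, 0 < A*x^2 + α*τ*x + 2 := by
    filter_upwards [eventually_gt_atTop (max 1 (|α*τ|/A))] with x hx
    have hx1 : (1:ℝ) < x := lt_of_le_of_lt (le_max_left _ _) hx
    have hx2 : |α*τ|/A < x := lt_of_le_of_lt (le_max_right _ _) hx
    have hx0 : (0:ℝ) < x := by linarith
    have h1 : |α*τ| < A*x := by
      rw [div_lt_iff₀ hA] at hx2; linarith [hx2]
    have h2 : -(α*τ) ≤ |α*τ| := neg_le_abs _
    nlinarith [mul_pos hx0 hx0]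
  -- derivative of F
  have hFderiv : ∀ x : ℝ, HasDerivAt F (-(g x)) x := by
    intro x
    have h := hasDerivAt_integral_Iic hgint hgcont x
    have h2 := (hasDerivAt_const x (1:ℝ)).sub h
    rw [hFdef, hesn]
    simpa [Pi.sub_def] using h2
  -- derivative of G
  have hGderiv : ∀ x : ℝ, 0 < x → HasDerivAt G (G' x) x := by
    intro x hx
    have hψd : HasDerivAt ψ (-A*x - α*τ) x := by
      have h1 := (((hasDerivAt_pow 2 x).const_mul (-A/2)).sub
        ((hasDerivAt_id x).const_mul (α*τ))).sub_const (τ^2/2)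
      convert h1 using 1
      · rfl
      · rfl
      · funext y; simp only [id_eq, Pi.sub_apply, hψdef]; push_cast; ring
      · push_cast; ring
    have hD : HasDerivAt (fun x : ℝ => s*c*x^2) (s*c*(2*x)) x := by
      have := (hasDerivAt_pow 2 x).const_mul (s*c)
      convert this using 1
      · rfl
      · rfl
      push_cast; ring
    have hden : s*c*x^2 ≠ 0 := by positivity
    have hGx := (hψd.exp).div hD hden
    convert hGx using 1
    · rfl
    · rfl
    · rfl
    rw [hG'def]
    field_simp
    ring
  -- F tends to 0
  have hF0 : Tendsto F atTop (nhds 0) := by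
    have hint : Tendsto (fun x => ∫ t in Set.Iic x, g t) atTop (nhds (∫ t, g t)) :=
      MeasureTheory.AECover.integral_tendsto_of_countably_generated
        (MeasureTheory.aecover_Iic (μ := volume) (l := atTop) (tendsto_id (α := ℝ))) hgint
    have hint1 : (∫ t, g t) = 1 := by
      rw [hgdef]
      rw [integral_div, esn_normalization α τ]
      exact div_self hΦτ.ne'
    rw [hint1] at hint
    have : Tendsto (fun x => 1 - esnCdf α τ x) atTop (nhds (1-1)) := by
      rw [hesn]
      exact (tendsto_const_nhds (x := (1:ℝ))).sub hint
    simpa using this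
  -- G tends to 0
  have hG0 : Tendsto G atTop (nhds 0) := by
    have hpoly : Tendsto (fun x : ℝ => s*c*x^2) atTop atTop := by
      apply Tendsto.const_mul_atTop (mul_pos hs hc)
      exact tendsto_pow_atTop (by norm_num)
    have hinv := hpoly.inv_tendsto_atTop
    apply squeeze_zero' (g := fun x => (s*c*x^2)⁻¹)
    · filter_upwards [eventually_gt_atTop (0:ℝ)] with x hx
      positivity
    · filter_upwards [eventually_gt_atTop (0:ℝ)] with x hx
      have hψle : ψ x ≤ 0 := by
        have hq : ψ x = -A*x^2/2 - α*τ*x - τ^2/2 := rfl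
        rw [hq, hAdef]
        nlinarith [sq_nonneg (α*x+τ), sq_nonneg x]
      have hexple : Real.exp (ψ x) ≤ 1 := Real.exp_le_one_iff.2 hψle
      calc G x = Real.exp (ψ x) / (s*c*x^2) := rfl
        _ ≤ 1 / (s*c*x^2) := by gcongr
        _ = (s*c*x^2)⁻¹ := one_div _
    · exact hinv
  -- G' eventually nonzero
  have hG'ne : ∀ᶠ x in atTop, G' x ≠ 0 := by
    filter_upwards [hQev, eventually_gt_atTop (0:ℝ)] with x hQ hx
    have hnum : Real.exp (ψ x) * (-(A*x^2 + α*τ*x + 2)) < 0 :=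
      mul_neg_of_pos_of_neg (Real.exp_pos _) (by linarith)
    have : G' x < 0 := div_neg_of_neg_of_pos hnum (by positivity)
    exact this.ne
  -- ratio of derivatives tends to 1
  have hratio : Tendsto (fun x => (-(g x)) / G' x) atTop (nhds 1) := by
    -- Mills factor
    have hlin : Tendsto (fun x : ℝ => α*x+τ) atTop atBot := by
      apply tendsto_atBot_add_const_right
      exact (tendsto_const_mul_atBot_of_neg hα).2 tendsto_id
    have hM : Tendsto (fun x => stdCdf (α*x+τ) * (-(α*x+τ)) / stdPdf (α*x+τ)) atTop (nhds 1) :=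
      mills.comp hlin
    -- rational factor
    have hR : Tendsto (fun x => A*(-α)*x^3 / ((-(α*x+τ)) * (A*x^2 + α*τ*x + 2))) atTop (nhds 1) := by
      have h1 : Tendsto (fun x : ℝ => τ/x) atTop (nhds 0) :=
        Tendsto.div_atTop tendsto_const_nhds tendsto_id
      have h2 : Tendsto (fun x : ℝ => α*τ/x) atTop (nhds 0) :=
        Tendsto.div_atTop tendsto_const_nhds tendsto_id
      have h3 : Tendsto (fun x : ℝ => 2/x^2) atTop (nhds 0) :=
        Tendsto.div_atTop tendsto_const_nhds (tendsto_pow_atTop (by norm_num))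
      have hden : Tendsto (fun x : ℝ => (-α - τ/x) * (A + α*τ/x + 2/x^2)) atTop
          (nhds ((-α - 0) * (A + 0 + 0))) :=
        Tendsto.mul ((tendsto_const_nhds).sub h1)
          (((tendsto_const_nhds).add h2).add h3)
      have hdenne : (-α - 0) * (A + 0 + 0) ≠ 0 := by
        simp only [sub_zero, add_zero]
        exact (mul_pos (by linarith) hA).ne'
      have hfin := (tendsto_const_nhds (x := A*(-α))).div hden hdenne
      have hval : A*(-α) / ((-α - 0) * (A + 0 + 0)) = 1 := by
        rw [sub_zero, add_zero, add_zero, mul_comm (-α) A]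
        exact div_self (mul_ne_zero hA.ne' (by linarith))
      rw [hval] at hfin
      refine Tendsto.congr' ?_ hfin
      filter_upwards [eventually_gt_atTop (0:ℝ)] with x hx
      simp only [Pi.div_apply]
      have hxne : x ≠ 0 := hx.ne'
      have hkey : (-α - τ/x) * (A + α*τ/x + 2/x^2)
          = ((-(α*x+τ)) * (A*x^2 + α*τ*x + 2)) / x^3 := by
        field_simp
        ring
      rw [hkey, div_div_eq_mul_div]
    have hMR := hM.mul hR
    rw [mul_one] at hMR
    refine Tendsto.congr' ?_ hMR
    filter_upwards [hQev, eventually_gt_atTop (0:ℝ),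
      hlin.eventually (eventually_lt_atBot (0:ℝ))] with x hQ hx hneg
    -- key exponential identity
    have hexp : Real.exp (ψ x) = s^2 * (stdPdf x * stdPdf (α*x+τ)) := by
      rw [hstdPdf x, hstdPdf (α*x+τ), div_mul_div_comm, ← Real.exp_add, sq, mul_comm (s*s),
        div_mul_cancel₀ _ (mul_ne_zero hs.ne' hs.ne')]
      congr 1
      simp only [hψdef, hAdef]
      ring
    have hφx : stdPdf x ≠ 0 := (stdPdf_pos x).ne'
    have hφa : stdPdf (α*x+τ) ≠ 0 := (stdPdf_pos _).ne'
    have hxne : x ≠ 0 := hx.ne'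
    rw [hgdef, hG'def]
    simp only
    rw [hexp, hcdef]
    exact (ratio_core α τ x s Φτ A (stdPdf x) (stdPdf (α*x+τ)) (stdCdf (α*x+τ))
      hs.ne' hΦτ.ne' hxne hφx hφa hα.ne hA.ne' hQ.ne' hneg.ne).symm
  -- l'Hôpital
  have hlhop : Tendsto (fun x => F x / G x) atTop (nhds 1) := by
    apply HasDerivAt.lhopital_zero_atTop (f' := fun x => -(g x)) (g' := G')
    · exact Filter.Eventually.of_forall hFderiv
    · filter_upwards [eventually_gt_atTop (0:ℝ)] with x hx
      exact hGderiv x hx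
    · exact hG'ne
    · exact hF0
    · exact hG0
    · exact hratio
  -- convert to the stated form
  refine Tendsto.congr' ?_ hlhop
  filter_upwards [eventually_gt_atTop (0:ℝ)] with x hx
  have hxne : x ≠ 0 := hx.ne'
  have hexp2 : Real.exp (α*τ*x + τ^2/2) * Real.exp (ψ x)
      = Real.exp (-(Real.sqrt A * x)^2/2) := by
    rw [← Real.exp_add]
    congr 1
    rw [mul_pow, hsA2]
    simp only [hψdef]
    ring
  rw [hGdef]
  simp only
  rw [hstdPdf (Real.sqrt A * x), hsA2, hcdef]
  exact (final_core Φτ α τ A s x (ψ x) (F x) hs.ne' hexp2).symm
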